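/- Let ξ be a real number which is neither rational nor a quadratic irrational, and suppose there exist an increasing sequence of positive integers (Y_k) and points (y_k) in ℤ³ with Y_{k+1} ≍ Y_k^γ, ‖y_k‖ ≍ Y_k, L(y_k) ≍ Y_k^{-1} (implied constants depending only on ξ), where γ = (1+√5)/2. Then ξ is extremal: there is a constant c > 0 such that for every real X ≥ 1 the system |x0| ≤ X, |x0ξ - x1| ≤ cX^{-1/γ}, |x0ξ² - x2| ≤ cX^{-1/γ} has a nonzero integer solution (x0,x1,x2). -/

import Mathlib

/-! Given X, pick k with c₂ Y_k ≤ X < c₂ Y_{k+1}. Since Y_{k+1} ≤ c₂ Y_k^γ, this gives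
X^{1/γ} ≪ Y_k, so y_k satisfies ‖y_k‖ ≤ X and L(y_k) ≪ Y_k⁻¹ ≪ X^{-1/γ}.
Values of X below c₂ Y_0 are handled by the point (0, 1, 0). -/

noncomputable def gam : ℝ := (1 + Real.sqrt 5) / 2

noncomputable def normT (x : Fin 3 → ℤ) : ℝ :=
  max (|(x 0 : ℝ)|) (max (|(x 1 : ℝ)|) (|(x 2 : ℝ)|))

noncomputable def Lf (ξ : ℝ) (x : Fin 3 → ℤ) : ℝ :=
  max (|(x 0 : ℝ) * ξ - (x 1 : ℝ)|) (|(x 0 : ℝ) * ξ ^ 2 - (x 2 : ℝ)|)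

lemma gam_pos : 0 < gam := by
  unfold gam
  positivity

lemma ne_zero_of_normT_pos {x : Fin 3 → ℤ} (h : 0 < normT x) : x ≠ 0 := by
  rintro rfl
  simp [normT] at h

lemma normT_single_one : normT ![0, 1, 0] = 1 := by
  simp [normT]

lemma Lf_single_one (ξ : ℝ) : Lf ξ ![0, 1, 0] = 1 := by
  simp [Lf]

lemma exists_le_and_lt_succ {α : Type*} [LinearOrder α] (f : ℕ → α) {x : α}
    (h0 : f 0 ≤ x) (h : ∃ n, x < f n) : ∃ k, f k ≤ x ∧ x < f (k + 1) := by
  by_contra! H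
  obtain ⟨n, hn⟩ := h
  have hle : ∀ m, f m ≤ x := by
    intro m
    induction m with
    | zero => exact h0
    | succ k ih => exact H k ih
  exact (hle n).not_gt hn

lemma exists_lt_mul_of_strictMono {Y : ℕ → ℕ} (hY : StrictMono Y) {c : ℝ} (hc : 0 < c)
    (X : ℝ) : ∃ n, X < c * Y n := by
  obtain ⟨n, hn⟩ := exists_nat_gt (X / c)
  refine ⟨n, ?_⟩
  have hnY : (n : ℝ) ≤ Y n := by exact_mod_cast hY.le_apply
  rw [← div_lt_iff₀' hc]
  exact hn.trans_le hnY

lemma inv_le_rpow_mul_rpow_neg {X Y C θ : ℝ} (hX : 0 < X) (hY : 0 < Y) (hθ : 0 < θ)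
    (h : X ≤ C * Y ^ θ) : Y⁻¹ ≤ C ^ (1 / θ) * X ^ (-1 / θ) := by
  have hC : 0 ≤ C := nonneg_of_mul_nonneg_left (hX.le.trans h) (by positivity)
  have hroot : X ^ (1 / θ) ≤ C ^ (1 / θ) * Y := by
    calc X ^ (1 / θ) ≤ (C * Y ^ θ) ^ (1 / θ) := by gcongr
      _ = C ^ (1 / θ) * Y := by
        rw [Real.mul_rpow hC (by positivity), ← Real.rpow_mul hY.le, mul_one_div_cancel hθ.ne',
          Real.rpow_one]
  rw [neg_div, Real.rpow_neg hX.le, ← div_eq_mul_inv, le_div_iff₀ (by positivity),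
    inv_mul_le_iff₀ hY, mul_comm Y]
  exact hroot

theorem extremal_of_good_sequence_general (ξ : ℝ)
    (Y : ℕ → ℕ) (hY1 : ∀ k, 1 ≤ Y k) (hYmono : StrictMono Y)
    (y : ℕ → Fin 3 → ℤ)
    (c₁ c₂ : ℝ) (hc₁ : 0 < c₁) (hc₂ : 0 < c₂)
    (hYk : ∀ k, c₁ * (Y k : ℝ) ^ gam ≤ (Y (k + 1) : ℝ) ∧
      (Y (k + 1) : ℝ) ≤ c₂ * (Y k : ℝ) ^ gam)
    (hnorm : ∀ k, c₁ * (Y k : ℝ) ≤ normT (y k) ∧ normT (y k) ≤ c₂ * (Y k : ℝ))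
    (hL : ∀ k, c₁ / (Y k : ℝ) ≤ Lf ξ (y k) ∧ Lf ξ (y k) ≤ c₂ / (Y k : ℝ)) :
    ∃ c : ℝ, 0 < c ∧ ∀ X : ℝ, 1 ≤ X → ∃ x : Fin 3 → ℤ, x ≠ 0 ∧
      |(x 0 : ℝ)| ≤ X ∧
      |(x 0 : ℝ) * ξ - (x 1 : ℝ)| ≤ c * X ^ (-1 / gam) ∧
      |(x 0 : ℝ) * ξ ^ 2 - (x 2 : ℝ)| ≤ c * X ^ (-1 / gam) := by
  have hYpos : ∀ k, (0 : ℝ) < Y k := fun k => by exact_mod_cast hY1 k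
  set c := max ((c₂ * Y 0) ^ (1 / gam)) (c₂ * (c₂ ^ 2) ^ (1 / gam))
  refine ⟨c, lt_max_of_lt_right (by positivity), fun X hX => ?_⟩
  have hXpos : 0 < X := one_pos.trans_le hX
  suffices ∃ x : Fin 3 → ℤ, x ≠ 0 ∧ normT x ≤ X ∧ Lf ξ x ≤ c * X ^ (-1 / gam) by
    obtain ⟨x, hx0, hnormx, hLx⟩ := this
    exact ⟨x, hx0, (le_max_left _ _).trans hnormx, (le_max_left _ _).trans hLx,
      (le_max_right _ _).trans hLx⟩
  rcases lt_or_ge X (c₂ * Y 0) with hsmall | hlarge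
  · refine ⟨![0, 1, 0], ne_zero_of_normT_pos (by simp [normT_single_one]),
      normT_single_one ▸ hX, ?_⟩
    have h : (1 : ℝ)⁻¹ ≤ (c₂ * Y 0) ^ (1 / gam) * X ^ (-1 / gam) :=
      inv_le_rpow_mul_rpow_neg hXpos one_pos gam_pos (by simpa using hsmall.le)
    rw [Lf_single_one]
    exact (inv_one.ge.trans h).trans (by gcongr; exact le_max_left _ _)
  · obtain ⟨k, hkX, hXk⟩ := exists_le_and_lt_succ (fun k => c₂ * (Y k : ℝ)) hlarge
      (exists_lt_mul_of_strictMono hYmono hc₂ X)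
    have hXY : X ≤ c₂ ^ 2 * (Y k : ℝ) ^ gam := by nlinarith [(hYk k).2]
    refine ⟨y k, ne_zero_of_normT_pos ((mul_pos hc₁ (hYpos k)).trans_le (hnorm k).1),
      (hnorm k).2.trans hkX, ?_⟩
    calc Lf ξ (y k) ≤ c₂ * (Y k : ℝ)⁻¹ := (hL k).2
      _ ≤ c₂ * ((c₂ ^ 2) ^ (1 / gam) * X ^ (-1 / gam)) := by
        gcongr; exact inv_le_rpow_mul_rpow_neg hXpos (hYpos k) gam_pos hXY
      _ ≤ c * X ^ (-1 / gam) := by rw [← mul_assoc]; gcongr; exact le_max_right _ _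

theorem extremal_of_good_sequence (ξ : ℝ)
    (hirr : ∀ p q r : ℤ, (p : ℝ) + q * ξ + r * ξ ^ 2 = 0 → p = 0 ∧ q = 0 ∧ r = 0)
    (Y : ℕ → ℕ) (hY1 : ∀ k, 1 ≤ Y k) (hYmono : StrictMono Y)
    (y : ℕ → Fin 3 → ℤ)
    (c₁ c₂ : ℝ) (hc₁ : 0 < c₁) (hc₂ : 0 < c₂)
    (hYk : ∀ k, c₁ * (Y k : ℝ) ^ gam ≤ (Y (k + 1) : ℝ) ∧
      (Y (k + 1) : ℝ) ≤ c₂ * (Y k : ℝ) ^ gam)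
    (hnorm : ∀ k, c₁ * (Y k : ℝ) ≤ normT (y k) ∧ normT (y k) ≤ c₂ * (Y k : ℝ))
    (hL : ∀ k, c₁ / (Y k : ℝ) ≤ Lf ξ (y k) ∧ Lf ξ (y k) ≤ c₂ / (Y k : ℝ)) :
    ∃ c : ℝ, 0 < c ∧ ∀ X : ℝ, 1 ≤ X → ∃ x : Fin 3 → ℤ, x ≠ 0 ∧
      |(x 0 : ℝ)| ≤ X ∧
      |(x 0 : ℝ) * ξ - (x 1 : ℝ)| ≤ c * X ^ (-1 / gam) ∧
      |(x 0 : ℝ) * ξ ^ 2 - (x 2 : ℝ)| ≤ c * X ^ (-1 / gam) :=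
  extremal_of_good_sequence_general ξ Y hY1 hYmono y c₁ c₂ hc₁ hc₂ hYk hnorm hL
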